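/- Let $k$ be a field of characteristic zero, let $G$ be a group with finite generating set $g_1, \dots, g_m$ acting on a finite free $\mathbb{Z}$-module (or finitely generated projective module over a finitely generated $\mathbb{Z}$-algebra) $M$ via $\rho: G \to \mathrm{GL}(M)$, such that $M \otimes \bar{\mathbb{Q}}$ is an irreducible $G$-representation. Then for all but finitely many primes $\lambda$, the reduction $M \otimes \bar{\mathbb{F}}_\lambda$ is an irreducible $G$-representation. Equivalently: if $M \otimes \bar{\mathbb{F}}_\lambda$ is reducible for infinitely many primes $\lambda$, then $M \otimes \bar{\mathbb{Q}}$ is reducible. -/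

import Mathlib

open Matrix

/-- Irreducibility of an integral matrix representation after extending scalars along a
ring homomorphism `f : ℤ →+* R` into a field `R`. -/
def IntMatrixRep.IsIrreducibleOver {G : Type*} [Group G] {r : ℕ}
    (ρ : G →* GL (Fin r) ℤ) (R : Type*) [Field R] (f : ℤ →+* R) : Prop :=
  ∀ W : Submodule R (Fin r → R),
    (∀ (g : G), ∀ v ∈ W, ((ρ g : Matrix (Fin r) (Fin r) ℤ).map f).mulVec v ∈ W) →
    W = ⊥ ∨ W = ⊤

set_option linter.unusedSectionVars false

open Matrix FirstOrder FirstOrder.Ring FirstOrder.Language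

set_option linter.unusedSectionVars false


namespace ResIrrAux

variable {G : Type*} [Group G] (s : Finset G) (r : ℕ) (ρ : G →* GL (Fin r) ℤ)

abbrev Var (s : Finset G) (r : ℕ) : Type _ :=
  (Fin r × Fin r) ⊕ ((↥s × Fin r × Fin r) ⊕ Fin r)

def bVar (i j : Fin r) : FreeCommRing (Var s r) := FreeCommRing.of (Sum.inl (i, j))
def cVar (g : ↥s) (i j : Fin r) : FreeCommRing (Var s r) :=
  FreeCommRing.of (Sum.inr (Sum.inl (g, i, j)))
def fVar (i : Fin r) : FreeCommRing (Var s r) := FreeCommRing.of (Sum.inr (Sum.inr i))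

noncomputable def eqFormula (x y : FreeCommRing (Var s r)) : Language.ring.Formula (Var s r) :=
  Term.equal (termOfFreeCommRing x) (termOfFreeCommRing y)

theorem realize_eqFormula {K : Type*} [Field K] [CompatibleRing K]
    (x y : FreeCommRing (Var s r)) (v : Var s r → K) (w : Fin 0 → K) :
    BoundedFormula.Realize (eqFormula s r x y) v w ↔
      FreeCommRing.lift v x = FreeCommRing.lift v y := by
  have hw : w = default := Subsingleton.elim _ _
  subst hw
  rw [eqFormula]
  exact (Formula.realize_equal (t₁ := termOfFreeCommRing x) (t₂ := termOfFreeCommRing y)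
    (x := v)).trans (by simp [realize_termOfFreeCommRing])

/-- The formula saying that the span of the columns of `B` is a nonzero proper
invariant subspace. -/
noncomputable def redFormula : Language.ring.Formula (Var s r) :=
  (BoundedFormula.iInf (fun gik : ↥s × Fin r × Fin r =>
      eqFormula s r
        (∑ t, (((ρ (gik.1 : G) : Matrix (Fin r) (Fin r) ℤ) gik.2.1 t : ℤ) : FreeCommRing (Var s r))
            * bVar s r t gik.2.2)
        (∑ t, bVar s r gik.2.1 t * cVar s r gik.1 t gik.2.2))) ⊓
  ((BoundedFormula.iSup (fun ij : Fin r × Fin r =>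
      (eqFormula s r (bVar s r ij.1 ij.2) 0).not)) ⊓
  ((BoundedFormula.iSup (fun i : Fin r => (eqFormula s r (fVar s r i) 0).not)) ⊓
   (BoundedFormula.iInf (fun k : Fin r =>
      eqFormula s r (∑ i, fVar s r i * bVar s r i k) 0))))

noncomputable def redSentence : Language.ring.Sentence :=
  ((redFormula s r ρ).relabel (Sum.inr : Var s r → Empty ⊕ Var s r)).iExs (Var s r)

theorem realize_redSentence (K : Type*) [Field K] [CompatibleRing K] :
    K ⊨ redSentence s r ρ ↔
      ∃ (B : Matrix (Fin r) (Fin r) K) (C : ↥s → Matrix (Fin r) (Fin r) K) (f : Fin r → K),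
        (∀ (g : ↥s) (i k : Fin r),
          (∑ t, ((((ρ (g : G)) : Matrix (Fin r) (Fin r) ℤ) i t : ℤ) : K) * B t k)
            = ∑ t, B i t * C g t k) ∧
        (∃ i j, B i j ≠ 0) ∧ (∃ i, f i ≠ 0) ∧ (∀ k, ∑ i, f i * B i k = 0) := by
  rw [Sentence.Realize, redSentence, Formula.realize_iExs]
  simp only [Formula.realize_relabel, Sum.elim_comp_inr]
  simp only [redFormula, Formula.Realize, BoundedFormula.realize_inf,
    BoundedFormula.realize_iInf, BoundedFormula.realize_iSup, BoundedFormula.realize_not,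
    Finset.mem_univ, true_implies, exists_prop, true_and, Sum.elim_inr,
    realize_eqFormula, map_sum, _root_.map_mul, map_intCast, FreeCommRing.lift_of, map_zero,
    bVar, cVar, fVar]
  constructor
  · rintro ⟨v, h1, h2, h3, h4⟩
    exact ⟨Matrix.of (fun i j => v (Sum.inl (i, j))),
      fun g => Matrix.of (fun i j => v (Sum.inr (Sum.inl (g, i, j)))),
      fun i => v (Sum.inr (Sum.inr i)),
      fun g i k => h1 (g, i, k),
      ⟨(h2.choose).1, (h2.choose).2, h2.choose_spec⟩,
      h3, h4⟩
  · rintro ⟨B, C, f, h1, ⟨i0, j0, h2⟩, h3, h4⟩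
    refine ⟨Sum.elim (fun ij => B ij.1 ij.2)
      (Sum.elim (fun gij => C gij.1 gij.2.1 gij.2.2) f), ?_, ?_, ?_, ?_⟩
    · exact fun gik => h1 gik.1 gik.2.1 gik.2.2
    · exact ⟨(i0, j0), h2⟩
    · exact h3
    · exact h4


section LinAlg

variable {K : Type*} [Field K]

/-- The matrix of `ρ g` over `K`. -/
noncomputable def AMat (g : G) : Matrix (Fin r) (Fin r) K :=
  (ρ g : Matrix (Fin r) (Fin r) ℤ).map ⇑(Int.castRingHom K)

theorem AMat_mul (g h : G) : (AMat r ρ (g * h) : Matrix (Fin r) (Fin r) K)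
    = AMat r ρ g * AMat r ρ h := by
  simp only [AMat, ← RingHom.mapMatrix_apply, ← _root_.map_mul, ← Units.val_mul]

theorem AMat_one : (AMat r ρ (1 : G) : Matrix (Fin r) (Fin r) K) = 1 := by
  have h1 : ρ (1 : G) = 1 := map_one ρ
  rw [AMat, h1, Units.val_one]
  exact Matrix.map_one _ (by simp) (by simp)

theorem invariant_all (hgen : Subgroup.closure (s : Set G) = ⊤)
    (W : Submodule K (Fin r → K))
    (hW : ∀ g ∈ s, ∀ v ∈ W, (AMat r ρ g (K := K)).mulVec v ∈ W) (g : G) :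
    ∀ v ∈ W, (AMat r ρ g (K := K)).mulVec v ∈ W := by
  have hg : g ∈ Subgroup.closure (s : Set G) := hgen ▸ Subgroup.mem_top g
  induction hg using Subgroup.closure_induction with
  | mem x hx => exact hW x hx
  | one => intro v hv; simpa [AMat_one] using hv
  | mul x y hx hy ihx ihy =>
    intro v hv
    rw [AMat_mul, ← Matrix.mulVec_mulVec]
    exact ihx _ (ihy _ hv)
  | inv x hx ih =>
    have hTT' : ((AMat r ρ x (K := K)).mulVecLin).comp ((AMat r ρ x⁻¹ (K := K)).mulVecLin)
        = LinearMap.id := by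
      rw [← Matrix.mulVecLin_mul, ← AMat_mul, mul_inv_cancel, AMat_one, Matrix.mulVecLin_one]
    have hT'T : ((AMat r ρ x⁻¹ (K := K)).mulVecLin).comp ((AMat r ρ x (K := K)).mulVecLin)
        = LinearMap.id := by
      rw [← Matrix.mulVecLin_mul, ← AMat_mul, inv_mul_cancel, AMat_one, Matrix.mulVecLin_one]
    let e : (Fin r → K) ≃ₗ[K] (Fin r → K) :=
      LinearEquiv.ofLinear ((AMat r ρ x (K := K)).mulVecLin)
        ((AMat r ρ x⁻¹ (K := K)).mulVecLin) hTT' hT'T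
    have hle : W.map (e : (Fin r → K) →ₗ[K] (Fin r → K)) ≤ W := by
      rintro _ ⟨v, hv, rfl⟩
      exact ih v hv
    have heq : W.map (e : (Fin r → K) →ₗ[K] (Fin r → K)) = W :=
      Submodule.eq_of_le_of_finrank_le hle (by rw [LinearEquiv.finrank_map_eq])
    intro v hv
    rw [← heq] at hv
    obtain ⟨w, hw, rfl⟩ := hv
    have hw' : (AMat r ρ x⁻¹ (K := K)).mulVec
        ((e : (Fin r → K) →ₗ[K] (Fin r → K)) w) = w := by
      have h := congrArg (fun f => f w) hT'T
      simp only [LinearMap.comp_apply, LinearMap.id_apply, Matrix.mulVecLin_apply] at h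
      have he : (e : (Fin r → K) →ₗ[K] (Fin r → K)) w
          = (AMat r ρ x (K := K)).mulVec w := rfl
      rw [he]
      exact h
    rw [hw']
    exact hw

theorem not_realize_of_irreducible [CompatibleRing K]
    (hgen : Subgroup.closure (s : Set G) = ⊤)
    (hirr : IntMatrixRep.IsIrreducibleOver ρ K (Int.castRingHom K)) :
    ¬ K ⊨ redSentence s r ρ := by
  rw [realize_redSentence]
  rintro ⟨B, C, f, h1, ⟨i0, j0, hB⟩, ⟨i1, hf⟩, h4⟩
  set W := LinearMap.range (B.mulVecLin) with hWdef
  have hmulBC : ∀ g : ↥s, (AMat r ρ (g : G) (K := K)) * B = B * C g := by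
    intro g
    ext i k
    rw [Matrix.mul_apply, Matrix.mul_apply]
    simpa [AMat, Matrix.map_apply] using h1 g i k
  have hWinv : ∀ g ∈ s, ∀ v ∈ W, (AMat r ρ g (K := K)).mulVec v ∈ W := by
    rintro g hg _ ⟨c, rfl⟩
    refine ⟨(C ⟨g, hg⟩).mulVec c, ?_⟩
    rw [Matrix.mulVecLin_apply, Matrix.mulVecLin_apply, Matrix.mulVec_mulVec,
      Matrix.mulVec_mulVec, ← hmulBC ⟨g, hg⟩]
  have hall : ∀ g : G, ∀ v ∈ W,
      ((ρ g : Matrix (Fin r) (Fin r) ℤ).map ⇑(Int.castRingHom K)).mulVec v ∈ W :=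
    fun g => invariant_all s r ρ hgen W hWinv g
  rcases hirr W hall with h | h
  · apply hB
    have hmem : B.mulVec (Pi.single j0 1) ∈ W := ⟨Pi.single j0 1, rfl⟩
    rw [h, Submodule.mem_bot] at hmem
    have := congrFun hmem i0
    simpa [Matrix.mulVec, dotProduct, Pi.single_apply] using this
  · have hmem : Pi.single i1 1 ∈ W := h ▸ Submodule.mem_top
    obtain ⟨c, hc⟩ := hmem
    rw [Matrix.mulVecLin_apply] at hc
    have hfc : f ⬝ᵥ B.mulVec c = f i1 := by
      rw [hc]; simp [dotProduct, Pi.single_apply]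
    rw [dotProduct_mulVec] at hfc
    have hv : Matrix.vecMul f B = 0 := by
      ext k
      simpa [Matrix.vecMul, dotProduct] using h4 k
    rw [hv] at hfc
    simp only [zero_dotProduct] at hfc
    exact hf hfc.symm

theorem irreducible_of_not_realize [CompatibleRing K]
    (hnot : ¬ K ⊨ redSentence s r ρ) :
    IntMatrixRep.IsIrreducibleOver ρ K (Int.castRingHom K) := by
  intro W hWinv
  by_contra hcon
  push_neg at hcon
  obtain ⟨hWbot, hWtop⟩ := hcon
  apply hnot
  rw [realize_redSentence]
  obtain ⟨W', hc⟩ := Submodule.exists_isCompl W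
  set π : (Fin r → K) →ₗ[K] (Fin r → K) :=
    W.subtype.comp (Submodule.linearProjOfIsCompl W W' hc) with hπdef
  have hπmem : ∀ v, π v ∈ W := fun v => (Submodule.linearProjOfIsCompl W W' hc v).2
  have hπid : ∀ v ∈ W, π v = v := by
    intro v hv
    have := Submodule.linearProjOfIsCompl_apply_left hc ⟨v, hv⟩
    simp only [hπdef, LinearMap.comp_apply, Submodule.subtype_apply]
    exact congrArg Subtype.val this
  set B := LinearMap.toMatrix' π with hBdef
  have hBv : ∀ v, B.mulVec v = π v := by
    intro v
    rw [hBdef, ← Matrix.toLin'_apply, Matrix.toLin'_toMatrix']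
  obtain ⟨φ, hφ0, hφ⟩ := Submodule.exists_dual_map_eq_bot_of_lt_top
    (lt_top_iff_ne_top.2 hWtop) inferInstance
  have hφW : ∀ v ∈ W, φ v = 0 := by
    intro v hv
    have : φ v ∈ W.map φ := ⟨v, hv, rfl⟩
    rw [hφ, Submodule.mem_bot] at this
    exact this
  refine ⟨B, fun g => LinearMap.toMatrix' ((Matrix.toLin' (AMat r ρ (g : G) (K := K))).comp π),
    fun i => φ (fun j => if i = j then 1 else 0), ?_, ?_, ?_, ?_⟩
  · intro g i k
    have hmat : (AMat r ρ (g : G) (K := K)) * B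
        = B * LinearMap.toMatrix' ((Matrix.toLin' (AMat r ρ (g : G) (K := K))).comp π) := by
      apply Matrix.toLin'.injective
      rw [Matrix.toLin'_mul, Matrix.toLin'_mul, hBdef, Matrix.toLin'_toMatrix',
        Matrix.toLin'_toMatrix']
      refine LinearMap.ext fun v => ?_
      simp only [LinearMap.comp_apply, Matrix.toLin'_apply]
      exact (hπid _ (hWinv (g : G) (π v) (hπmem v))).symm
    have := congrFun (congrFun hmat i) k
    rw [Matrix.mul_apply, Matrix.mul_apply] at this
    simpa [AMat, Matrix.map_apply] using this
  · obtain ⟨v, hv, hv0⟩ := Submodule.ne_bot_iff W |>.1 hWbot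
    by_contra hB0
    push_neg at hB0
    have : B = 0 := by ext i j; exact hB0 i j
    apply hv0
    rw [← hπid v hv, ← hBv v, this, Matrix.zero_mulVec]
  · by_contra hf0
    push_neg at hf0
    apply hφ0
    refine LinearMap.ext fun v => ?_
    rw [LinearMap.pi_apply_eq_sum_univ φ v]
    simp [hf0]
  · intro k
    have hcol : (fun i => B i k) ∈ W := by
      have : B.mulVec (Pi.single k 1) ∈ W := by rw [hBv]; exact hπmem _
      convert this using 1
      ext i
      simp [Matrix.mulVec, dotProduct, Pi.single_apply]
    have := hφW _ hcol
    rw [LinearMap.pi_apply_eq_sum_univ φ (fun i => B i k)] at this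
    refine Eq.trans ?_ this
    exact Finset.sum_congr rfl (fun i _ => by rw [smul_eq_mul, mul_comm])

end LinAlg

end ResIrrAux

open FirstOrder.Field FirstOrder.Ring FirstOrder.Language in
/-- Let `G` be a finitely generated group acting on a finite free
`ℤ`-module `M` such that `M ⊗ ℚ̄` is irreducible.  Then for all but finitely many primes
`p`, the reduction `M ⊗ 𝔽̄_p` is irreducible. -/
theorem residually_irreducible_for_almost_all_primes
    {G : Type*} [Group G] (s : Finset G) (hgen : Subgroup.closure (s : Set G) = ⊤)
    (r : ℕ) (ρ : G →* GL (Fin r) ℤ)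
    (hirr : IntMatrixRep.IsIrreducibleOver ρ (AlgebraicClosure ℚ)
      (Int.castRingHom (AlgebraicClosure ℚ))) :
    ∃ N : ℕ, ∀ (p : ℕ) [Fact p.Prime], N < p →
      IntMatrixRep.IsIrreducibleOver ρ (AlgebraicClosure (ZMod p))
        (Int.castRingHom (AlgebraicClosure (ZMod p))) := by
  classical
  letI := compatibleRingOfRing (AlgebraicClosure ℚ)
  haveI : CharP (AlgebraicClosure ℚ) 0 := CharP.ofCharZero _
  have h0 : ¬ (AlgebraicClosure ℚ) ⊨ ResIrrAux.redSentence s r ρ :=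
    ResIrrAux.not_realize_of_irreducible s r ρ hgen hirr
  have hz : Language.Theory.ACF 0 ⊨ᵇ (ResIrrAux.redSentence s r ρ).not := by
    rcases (ACF_isComplete (Or.inr rfl)).2 (ResIrrAux.redSentence s r ρ) with h | h
    · exact absurd
        (Language.Theory.models_sentence_iff.mp h
          (Language.Theory.ModelType.of _ (AlgebraicClosure ℚ))) h0
    · exact h
  have hfin := finite_ACF_prime_not_realize_of_ACF_zero_realize _ hz
  refine ⟨hfin.toFinset.sup (fun p => (p : ℕ)), ?_⟩
  intro p hp hNp
  have hps : (⟨p, hp.out⟩ : Nat.Primes) ∉ hfin.toFinset := by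
    intro hmem
    exact absurd (Finset.le_sup (f := fun q : Nat.Primes => (q : ℕ)) hmem) (not_le.2 hNp)
  replace hps := fun h => hps (hfin.mem_toFinset.mpr h)
  have hps2 : Language.Theory.ACF p ⊨ᵇ (ResIrrAux.redSentence s r ρ).not :=
    not_not.mp hps
  letI := compatibleRingOfRing (AlgebraicClosure (ZMod p))
  have hnreal : ¬ (AlgebraicClosure (ZMod p)) ⊨ ResIrrAux.redSentence s r ρ := by
    have h := Language.Theory.models_sentence_iff.mp hps2
      (Language.Theory.ModelType.of _ (AlgebraicClosure (ZMod p)))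
    rw [Language.Sentence.realize_not] at h
    exact h
  exact ResIrrAux.irreducible_of_not_realize s r ρ hnreal
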